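/- arXiv:1505.01993 — 2 statements merged into one kernel-verified Lean document; each statement's English description precedes it below -/
import Mathlib

section
/- Let C ⊆ F_q^n be a linear code of dimension k, minimum distance d and genus g = n+1−k−d ≥ 1, whose dual code has minimum distance d⊥ and genus g⊥ = k+1−d⊥ ≥ 1, and set r = g + g⊥. Suppose c_0, …, c_{r−2} ∈ ℚ satisfy W_C(x,y) = M_{n,n+1−k}(x,y) + (q−1)·Σ_{i=0}^{r−2} c_i·C(n,d+i)·(x−y)^{n−d−i}·y^{d+i}. Then for 0 ≤ i ≤ g−1 one has c_i = (q−1)^{−1}·C(n,d+i)^{−1}·Σ_{w=d}^{d+i} C(n−w, n−d−i)·W_C^{(w)}, and for g ≤ i ≤ r−2 one has c_i = (q−1)^{−1}·C(n,d+i)^{−1}·( Σ_{w=d}^{d+g−1} C(n−w, n−d−i)·W_C^{(w)} + Σ_{w=d+g}^{d+i} C(n−w, n−d−i)·[ W_C^{(w)} − C(n,w)·Σ_{j=0}^{w−n−1+k} (−1)^{j}·C(w,j)·(q^{w−n+k−j} − 1) ] ). In particular, (q−1)·C(n,d+i)·c_i is an integer for every 0 ≤ i ≤ r−2. -/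
/-- The number `W_C^{(w)}` of codewords of the linear code `C` of Hamming weight `w`. -/
noncomputable def wtCount {F : Type*} [Field F] [Fintype F] [DecidableEq F] {n : ℕ}
    (C : Submodule F (Fin n → F)) (w : ℕ) : ℕ :=
  Nat.card {c : Fin n → F // c ∈ C ∧ hammingNorm c = w}

/-- The homogeneous weight enumerator `W_C(x,y) = x^n + Σ_{w=d}^n W_C^{(w)} x^{n-w} y^w`
of a code `C` of minimum distance `d`, evaluated at rationals `x, y`. -/
noncomputable def wEnum {F : Type*} [Field F] [Fintype F] [DecidableEq F] {n : ℕ}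
    (C : Submodule F (Fin n → F)) (d : ℕ) (x y : ℚ) : ℚ :=
  x ^ n + ∑ w ∈ Finset.Icc d n, (wtCount C w : ℚ) * x ^ (n - w) * y ^ w

/-- The MDS weight enumerator `M_{n,s}(x,y)` over a field with `q` elements,
evaluated at rationals `x, y`. -/
noncomputable def Mds (q n s : ℕ) (x y : ℚ) : ℚ :=
  x ^ n + ∑ w ∈ Finset.Icc s n, (n.choose w : ℚ) *
    (∑ i ∈ Finset.range (w - s + 1),
      (-1 : ℚ) ^ i * (w.choose i : ℚ) * ((q : ℚ) ^ (w + 1 - s - i) - 1)) *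
    x ^ (n - w) * y ^ w

/-
Put `y = 1` and `x = z + 1`. The hypothesis becomes a polynomial identity in `z`:
`Σ_{w ≥ d} W_C^{(w)} (z+1)^{n-w} - Σ_{w ≥ n+1-k} M_w (z+1)^{n-w}`
  `= (q-1) Σ_i c_i C(n,d+i) z^{n-d-i}`,
where `M_w` are the coefficients of the MDS enumerator. Expanding `(z+1)^{n-w}` binomially and
comparing coefficients of `z^{n-d-i}` gives
`(q-1) C(n,d+i) c_i = Σ_{w ≤ d+i} C(n-w, n-d-i) W_C^{(w)}`
  `- Σ_{d+g ≤ w ≤ d+i} C(n-w, n-d-i) M_w`,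
an integer; the terms with `w > d+i` drop out because then `C(n-w, n-d-i) = 0`.
-/

open Finset Polynomial

theorem Finset.sum_Icc_eq_sum_Icc_add_sum_Icc {M : Type*} [AddCommMonoid M] (f : ℕ → M)
    {a b c : ℕ} (hab : a < b) (hbc : b ≤ c + 1) :
    ∑ w ∈ Icc a c, f w = ∑ w ∈ Icc a (b - 1), f w + ∑ w ∈ Icc b c, f w := by
  rw [← sum_union (disjoint_left.mpr fun w hw hw' => by simp only [mem_Icc] at hw hw'; omega)]
  congr 1
  ext w
  simp only [mem_Icc, mem_union]
  omega

namespace Polynomial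

variable {R : Type*}

theorem coeff_sum_C_mul_X_add_one_pow [CommSemiring R] (a : ℕ → R) (s n m : ℕ) :
    (∑ w ∈ Icc s n, C (a w) * (X + 1) ^ (n - w)).coeff m =
      ∑ w ∈ Icc s (n - m), ((n - w).choose m : R) * a w := by
  simp only [finsetSum_coeff, coeff_C_mul, coeff_X_add_one_pow, mul_comm (a _)]
  refine (sum_subset (Icc_subset_Icc_right (Nat.sub_le n m)) fun w hw hw' => ?_).symm
  simp only [mem_Icc] at hw hw'
  simp [Nat.choose_eq_zero_of_lt (show n - w < m by omega)]

theorem coeff_sum_C_mul_X_pow_sub [Semiring R] (b : ℕ → R) {N n j : ℕ} (hN : N ≤ n + 1)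
    (hj : j < N) : (∑ i ∈ range N, C (b i) * X ^ (n - i)).coeff (n - j) = b j := by
  simp only [finsetSum_coeff, coeff_C_mul, coeff_X_pow]
  rw [sum_eq_single j
    (fun i hi _ => by simp only [mem_range] at hi; simp [show n - j ≠ n - i by omega])
    (fun h => absurd (mem_range.mpr hj) h)]
  simp

end Polynomial

noncomputable def mdsCoeff (q n s w : ℕ) : ℚ :=
  (n.choose w : ℚ) * ∑ i ∈ range (w - s + 1),
    (-1 : ℚ) ^ i * (w.choose i : ℚ) * ((q : ℚ) ^ (w + 1 - s - i) - 1)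

theorem Mds_eq (q n s : ℕ) (x y : ℚ) :
    Mds q n s x y = x ^ n + ∑ w ∈ Icc s n, mdsCoeff q n s w * x ^ (n - w) * y ^ w :=
  rfl

theorem mdsCoeff_eq_of_add_eq {q n s k w : ℕ} (hs : n + 1 = k + s) (hw : s ≤ w) :
    mdsCoeff q n s w = (n.choose w : ℚ) * ∑ j ∈ range (w + k - n),
      (-1 : ℚ) ^ j * (w.choose j : ℚ) * ((q : ℚ) ^ (w + k - n - j) - 1) := by
  rw [mdsCoeff, show w - s + 1 = w + k - n by omega]
  refine congrArg _ (sum_congr rfl fun j _ => ?_)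
  rw [show w + 1 - s - j = w + k - n - j by omega]

section Code

variable {F : Type*} [Field F] [Fintype F] [DecidableEq F] {n : ℕ}

theorem sub_one_mul_choose_mul_eq_of_wEnum_eq (C : Submodule F (Fin n → F)) {d s N q : ℕ}
    (c : ℕ → ℚ) (hN : d + N ≤ n + 1)
    (hW : ∀ x y : ℚ, wEnum C d x y = Mds q n s x y +
      ((q : ℚ) - 1) * ∑ i ∈ range N,
        c i * (n.choose (d + i) : ℚ) * (x - y) ^ (n - d - i) * y ^ (d + i))
    {i : ℕ} (hi : i < N) :
    ((q : ℚ) - 1) * (n.choose (d + i) : ℚ) * c i =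
      ∑ w ∈ Icc d (d + i), ((n - w).choose (n - d - i) : ℚ) * (wtCount C w : ℚ) -
        ∑ w ∈ Icc s (d + i), ((n - w).choose (n - d - i) : ℚ) * mdsCoeff q n s w := by
  have hpoly : ∑ w ∈ Icc d n, Polynomial.C (wtCount C w : ℚ) * (X + 1) ^ (n - w) -
      ∑ w ∈ Icc s n, Polynomial.C (mdsCoeff q n s w) * (X + 1) ^ (n - w) =
      ∑ i ∈ range N,
        Polynomial.C (((q : ℚ) - 1) * (n.choose (d + i) : ℚ) * c i) * X ^ (n - d - i) := by
    refine Polynomial.funext fun z => ?_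
    have h := hW (z + 1) 1
    simp only [wEnum, Mds_eq, add_sub_cancel_right, one_pow, mul_one, mul_sum] at h
    simp only [eval_sub, eval_finsetSum, eval_mul, eval_C, eval_pow, eval_add, eval_X, eval_one]
    rw [sum_congr rfl fun i _ =>
      show ((q : ℚ) - 1) * (n.choose (d + i) : ℚ) * c i * z ^ (n - d - i) =
        ((q : ℚ) - 1) * (c i * (n.choose (d + i) : ℚ) * z ^ (n - d - i)) by ring]
    linarith
  have hcoeff := congrArg (coeff · (n - d - i)) hpoly
  rw [coeff_sub, coeff_sum_C_mul_X_add_one_pow, coeff_sum_C_mul_X_add_one_pow,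
    coeff_sum_C_mul_X_pow_sub _ (show N ≤ n - d + 1 by omega) hi,
    show n - (n - d - i) = d + i by omega] at hcoeff
  exact hcoeff.symm

end Code

theorem duursma_reduced_of_weights_general {F : Type*} [Field F] [Fintype F] [DecidableEq F]
    {n k d dperp g gperp q : ℕ}
    (C : Submodule F (Fin n → F))
    (hq : q = Fintype.card F)
    (hg : 1 ≤ g) (hgdef : n + 1 = k + d + g)
    (hgp : 1 ≤ gperp) (hgpdef : k + 1 = dperp + gperp)
    (c : ℕ → ℚ)
    (hW : ∀ x y : ℚ, wEnum C d x y =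
      Mds q n (n + 1 - k) x y +
        ((q : ℚ) - 1) * ∑ i ∈ Finset.range (g + gperp - 1),
          c i * ((n.choose (d + i) : ℚ)) * (x - y) ^ (n - d - i) * y ^ (d + i)) :
    (∀ i ≤ g - 1,
      c i = ((q : ℚ) - 1)⁻¹ * ((n.choose (d + i) : ℚ))⁻¹ *
        ∑ w ∈ Finset.Icc d (d + i),
          ((n - w).choose (n - d - i) : ℚ) * (wtCount C w : ℚ)) ∧
    (∀ i, g ≤ i → i ≤ g + gperp - 2 →
      c i = ((q : ℚ) - 1)⁻¹ * ((n.choose (d + i) : ℚ))⁻¹ *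
        ((∑ w ∈ Finset.Icc d (d + g - 1),
            ((n - w).choose (n - d - i) : ℚ) * (wtCount C w : ℚ)) +
          ∑ w ∈ Finset.Icc (d + g) (d + i),
            ((n - w).choose (n - d - i) : ℚ) *
              ((wtCount C w : ℚ) - (n.choose w : ℚ) *
                ∑ j ∈ Finset.range (w + k - n),
                  (-1 : ℚ) ^ j * (w.choose j : ℚ) * ((q : ℚ) ^ (w + k - n - j) - 1)))) ∧
    (∀ i ≤ g + gperp - 2, ∃ m : ℤ,
      ((q : ℚ) - 1) * (n.choose (d + i) : ℚ) * c i = (m : ℚ)) := by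
  rw [show n + 1 - k = d + g by omega] at hW
  have key i (hi : i ≤ g + gperp - 2) := sub_one_mul_choose_mul_eq_of_wEnum_eq C c
    (N := g + gperp - 1) (by omega) hW (i := i) (by omega)
  have hsolve i (hi : i ≤ g + gperp - 2) (S : ℚ)
      (h : ((q : ℚ) - 1) * (n.choose (d + i) : ℚ) * c i = S) :
      c i = ((q : ℚ) - 1)⁻¹ * ((n.choose (d + i) : ℚ))⁻¹ * S := by
    have hq1 : (q : ℚ) - 1 ≠ 0 :=
      sub_ne_zero.mpr (by exact_mod_cast hq ▸ Fintype.one_lt_card.ne')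
    have hchoose : (n.choose (d + i) : ℚ) ≠ 0 := by
      exact_mod_cast (Nat.choose_pos (by omega)).ne'
    rwa [← mul_inv, eq_inv_mul_iff_mul_eq₀ (mul_ne_zero hq1 hchoose)]
  refine ⟨fun i hi => ?_, fun i hgi hi => hsolve i hi _ ?_, fun i hi => ?_⟩
  · refine hsolve i (by omega) _ ?_
    rw [key i (by omega), Icc_eq_empty (a := d + g) (b := d + i) (by omega), sum_empty, sub_zero]
  · rw [key i hi, sum_Icc_eq_sum_Icc_add_sum_Icc _ (b := d + g) (by omega) (by omega),
      add_sub_assoc, ← sum_sub_distrib]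
    refine congrArg _ (sum_congr rfl fun w hw => ?_)
    rw [mdsCoeff_eq_of_add_eq (k := k) (by omega) (mem_Icc.mp hw).1]
    ring
  · refine ⟨∑ w ∈ Icc d (d + i), ((n - w).choose (n - d - i) : ℤ) * (wtCount C w : ℤ) -
      ∑ w ∈ Icc (d + g) (d + i), ((n - w).choose (n - d - i) : ℤ) * ((n.choose w : ℤ) *
        ∑ j ∈ range (w - (d + g) + 1),
          (-1 : ℤ) ^ j * (w.choose j : ℤ) * ((q : ℤ) ^ (w + 1 - (d + g) - j) - 1)), ?_⟩
    rw [key i hi]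
    push_cast [mdsCoeff]
    rfl

/-- The coefficients `c_i` of Duursma's reduced polynomial of a linear code
`C ⊆ F_q^n` of dimension `k`, minimum distance `d` and genus `g = n+1−k−d ≥ 1`,
whose dual has minimum distance `d⊥` and genus `g⊥ = k+1−d⊥ ≥ 1`, are determined by
the weight distribution via the displayed formulas; in particular
`(q−1)·C(n,d+i)·c_i` is an integer for every `0 ≤ i ≤ g+g⊥−2`. -/
theorem duursma_reduced_of_weights {F : Type*} [Field F] [Fintype F] [DecidableEq F]
    {n k d dperp g gperp q : ℕ}
    (C Cd : Submodule F (Fin n → F))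
    (hq : q = Fintype.card F)
    (hk : Module.finrank F C = k)
    (hd1 : ∀ c ∈ C, c ≠ 0 → d ≤ hammingNorm c)
    (hd2 : ∃ c ∈ C, c ≠ 0 ∧ hammingNorm c = d)
    (hCd : ∀ y : Fin n → F, y ∈ Cd ↔ ∀ x ∈ C, ∑ i, x i * y i = 0)
    (hdp1 : ∀ c ∈ Cd, c ≠ 0 → dperp ≤ hammingNorm c)
    (hdp2 : ∃ c ∈ Cd, c ≠ 0 ∧ hammingNorm c = dperp)
    (hg : 1 ≤ g) (hgdef : n + 1 = k + d + g)
    (hgp : 1 ≤ gperp) (hgpdef : k + 1 = dperp + gperp)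
    (c : ℕ → ℚ)
    (hW : ∀ x y : ℚ, wEnum C d x y =
      Mds q n (n + 1 - k) x y +
        ((q : ℚ) - 1) * ∑ i ∈ Finset.range (g + gperp - 1),
          c i * ((n.choose (d + i) : ℚ)) * (x - y) ^ (n - d - i) * y ^ (d + i)) :
    (∀ i ≤ g - 1,
      c i = ((q : ℚ) - 1)⁻¹ * ((n.choose (d + i) : ℚ))⁻¹ *
        ∑ w ∈ Finset.Icc d (d + i),
          ((n - w).choose (n - d - i) : ℚ) * (wtCount C w : ℚ)) ∧
    (∀ i, g ≤ i → i ≤ g + gperp - 2 →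
      c i = ((q : ℚ) - 1)⁻¹ * ((n.choose (d + i) : ℚ))⁻¹ *
        ((∑ w ∈ Finset.Icc d (d + g - 1),
            ((n - w).choose (n - d - i) : ℚ) * (wtCount C w : ℚ)) +
          ∑ w ∈ Finset.Icc (d + g) (d + i),
            ((n - w).choose (n - d - i) : ℚ) *
              ((wtCount C w : ℚ) - (n.choose w : ℚ) *
                ∑ j ∈ Finset.range (w + k - n),
                  (-1 : ℚ) ^ j * (w.choose j : ℚ) * ((q : ℚ) ^ (w + k - n - j) - 1)))) ∧
    (∀ i ≤ g + gperp - 2, ∃ m : ℤ,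
      ((q : ℚ) - 1) * (n.choose (d + i) : ℚ) * c i = (m : ℚ)) :=
  duursma_reduced_of_weights_general C hq hg hgdef hgp hgpdef c hW
end

section
/- Let q ≥ 2 and g ≥ 1 be integers and A_0, …, A_{g−1} integers with A_0 = 1 and A_j ≥ 0 for all j. Put D(t) := Σ_{j=0}^{g−1} A_j t^{j} + Σ_{j=g}^{2g−2} A_{2g−2−j}·q^{j−g+1}·t^{j}, and define (B_i)_{i ≥ 0} by the formal power series identity D(t)/((1−t)(1−qt)) = Σ_{i ≥ 0} B_i t^{i}. Then B_i ≥ 1 for every i ≥ 0, B_i = q^{i−g+2}·B_{2g−4−i} + D(1)·(q^{i−g+2} − 1)/(q − 1) for all g−1 ≤ i ≤ 2g−4, and B_i = D(1)·(q^{i−g+2} − 1)/(q − 1) for all i ≥ 2g−3. -/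
open Polynomial PowerSeries

/-- Duursma's reduced polynomial
`D(t) = Σ_{j=0}^{g−1} A_j t^j + Σ_{j=g}^{2g−2} A_{2g−2−j} q^{j−g+1} t^j` built from
the numbers `A_0, …, A_{g−1}` of effective divisors of small degree. -/
noncomputable def duursmaD (q g : ℕ) (A : ℕ → ℤ) : Polynomial ℚ :=
  (∑ j ∈ Finset.range g, Polynomial.C (A j : ℚ) * Polynomial.X ^ j) +
    ∑ j ∈ Finset.Icc g (2 * g - 2),
      Polynomial.C ((A (2 * g - 2 - j) : ℚ) * (q : ℚ) ^ (j + 1 - g)) * Polynomial.X ^ j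

/-!
Write `g = m + 1` and `d_j` for the coefficients of `D`. Since
`(q - 1)/((1 - t)(1 - qt)) = q/(1 - qt) - 1/(1 - t)`, the hypothesis on `B` says
`(q - 1) B_i = Σ_{j ≤ i} d_j (q^{i+1-j} - 1)`; with `d_0 = 1` and `d_j ≥ 0` this gives
`B_i ≥ 1`. The functional equation `d_j = q^{j-m} d_{2m-j}` of `D` turns
`Σ_{j ≤ i} d_j q^{i+1-j}` into `q^{i+1-m} Σ_{j ≤ i} d_{2m-j}`, a tail of `D(1) = Σ_j d_j`.
This expresses `(q - 1) B_i` through partial sums of the `d_j`; comparing the expressions at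
`i` and `2m - 2 - i` gives the relations in the middle range, and for `i ≥ 2m - 1` the tail
is all of `D(1)`.
-/

open Finset

theorem Finset.sum_range_reflect_eq_sub {M : Type*} [AddCommGroup M] (f : ℕ → M) {n k N : ℕ}
    (h : n + k = N + 1) :
    ∑ j ∈ range n, f (N - j) = ∑ j ∈ range (N + 1), f j - ∑ j ∈ range k, f j := by
  rw [eq_sub_iff_add_eq', ← sum_range_add_sum_Ico f (by omega : k ≤ N + 1),
    ← Nat.Ico_zero_eq_range n, sum_Ico_reflect f 0 (by omega : n ≤ N + 1),
    show N + 1 - n = k by omega, Nat.sub_zero]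

namespace PowerSeries

theorem mk_pow_mul_one_sub_C_mul_X {R : Type*} [CommRing R] (a : R) :
    (mk fun n => a ^ n) * (1 - C a * X) = 1 := by
  simpa [rescale_mk, rescale_X] using congrArg (rescale a) (mk_one_mul_one_sub_eq_one (S := R))

theorem sub_one_mul_coeff_eq_sum {R : Type*} [CommRing R] {q : R} {P B : R⟦X⟧}
    (hB : P = (1 - X) * (1 - C q * X) * B) (i : ℕ) :
    (q - 1) * coeff i B = ∑ j ∈ range (i + 1), coeff j P * (q ^ (i + 1 - j) - 1) := by
  have hpartial : (1 - X) * (1 - C q * X) * (C q * mk (fun n => q ^ n) - mk 1) = C (q - 1) := by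
    rw [map_sub, map_one]
    linear_combination (C q * (1 - X)) * mk_pow_mul_one_sub_C_mul_X q -
      (1 - C q * X) * mk_one_mul_one_sub_eq_one (S := R)
  have hB' : C (q - 1) * B = P * (C q * mk (fun n => q ^ n) - mk 1) := by
    rw [← hpartial, hB]; ring
  rw [← coeff_C_mul, hB', coeff_mul, Nat.sum_antidiagonal_eq_sum_range_succ
    (fun a b => coeff a P * coeff b (C q * mk (fun n => q ^ n) - mk 1))]
  refine sum_congr rfl fun j hj => ?_
  rw [map_sub, coeff_C_mul, coeff_mk, coeff_mk, Pi.one_apply, ← pow_succ',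
    show i - j + 1 = i + 1 - j by have := mem_range.mp hj; omega]

theorem one_le_coeff_of_eq_mul {K : Type*} [Field K] [LinearOrder K] [IsStrictOrderedRing K]
    {q : K} {P B : K⟦X⟧} (hB : P = (1 - X) * (1 - C q * X) * B) (hq : 1 < q)
    (hP₀ : 1 ≤ coeff 0 P) (hP : ∀ j, 0 ≤ coeff j P) (i : ℕ) : 1 ≤ coeff i B := by
  have hterm : ∀ j ∈ range (i + 1), 0 ≤ coeff j P * (q ^ (i + 1 - j) - 1) := fun j _ ↦
    mul_nonneg (hP j) (sub_nonneg.mpr (one_le_pow₀ hq.le))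
  refine le_of_mul_le_mul_left ?_ (sub_pos.mpr hq)
  calc (q - 1) * 1 = q - 1 := mul_one _
    _ ≤ q ^ (i + 1 - 0) - 1 := by gcongr; exact le_self_pow₀ hq.le (by omega)
    _ ≤ coeff 0 P * (q ^ (i + 1 - 0) - 1) :=
        le_mul_of_one_le_left (sub_nonneg.mpr (one_le_pow₀ hq.le)) hP₀
    _ ≤ ∑ j ∈ range (i + 1), coeff j P * (q ^ (i + 1 - j) - 1) :=
        single_le_sum hterm (mem_range.mpr i.succ_pos)
    _ = (q - 1) * coeff i B := (sub_one_mul_coeff_eq_sum hB i).symm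

end PowerSeries

namespace Polynomial

variable {K : Type*} [Field K] {P : K[X]} {q : K} {m : ℕ}

theorem sub_one_mul_eq_sum_of_coe_eq_mul {B : ℕ → K}
    (hB : (P : K⟦X⟧) = (1 - PowerSeries.X) * (1 - PowerSeries.C q * PowerSeries.X) *
      PowerSeries.mk B) (i : ℕ) :
    (q - 1) * B i = ∑ j ∈ range (i + 1), P.coeff j * (q ^ (i + 1 - j) - 1) := by
  simpa using PowerSeries.sub_one_mul_coeff_eq_sum hB i

/-- `P(t) = q^m t^{2m} P(1/(qt))`, written on coefficients. -/
structure SatisfiesFunctionalEquation (P : K[X]) (q : K) (m : ℕ) : Prop where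
  natDegree_le : P.natDegree ≤ 2 * m
  coeff_eq : ∀ j ≤ 2 * m, P.coeff j = q ^ ((j : ℤ) - m) * P.coeff (2 * m - j)

namespace SatisfiesFunctionalEquation

theorem eval_one_eq_sum (hP : P.SatisfiesFunctionalEquation q m) :
    P.eval 1 = ∑ j ∈ range (2 * m + 1), P.coeff j := by
  simp [eval_eq_sum_range' (Nat.lt_succ_of_le hP.natDegree_le)]

theorem coeff_mul_pow (hP : P.SatisfiesFunctionalEquation q m) (hq : q ≠ 0) {i j : ℕ}
    (hj : j ≤ 2 * m) (hji : j ≤ i + 1) :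
    P.coeff j * q ^ (i + 1 - j) = q ^ ((i : ℤ) + 1 - m) * P.coeff (2 * m - j) := by
  rw [hP.coeff_eq j hj, mul_right_comm, ← zpow_natCast, ← zpow_add₀ hq]
  congr 2
  push_cast [hji]
  ring

theorem sum_coeff_mul_pow (hP : P.SatisfiesFunctionalEquation q m) (hq : q ≠ 0) {i n k : ℕ}
    (hnk : n + k = 2 * m + 1) (hni : n ≤ i + 2) :
    ∑ j ∈ range n, P.coeff j * q ^ (i + 1 - j) =
      q ^ ((i : ℤ) + 1 - m) * (P.eval 1 - ∑ j ∈ range k, P.coeff j) := by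
  rw [hP.eval_one_eq_sum, ← sum_range_reflect_eq_sub _ hnk, mul_sum]
  exact sum_congr rfl fun j hj ↦ hP.coeff_mul_pow hq (by grind) (by grind)

theorem sum_coeff_mul_pow_sub_one (hP : P.SatisfiesFunctionalEquation q m) (hq : q ≠ 0)
    {i k : ℕ} (hik : i + k = 2 * m) :
    ∑ j ∈ range (i + 1), P.coeff j * (q ^ (i + 1 - j) - 1) =
      q ^ ((i : ℤ) + 1 - m) * (P.eval 1 - ∑ j ∈ range k, P.coeff j) -
        ∑ j ∈ range (i + 1), P.coeff j := by
  simp only [mul_sub_one, sum_sub_distrib]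
  rw [hP.sum_coeff_mul_pow hq (k := k) (by omega) (by omega)]

theorem sum_coeff_mul_pow_sub_one_of_le (hP : P.SatisfiesFunctionalEquation q m) (hq : q ≠ 0)
    {i : ℕ} (hi : 2 * m ≤ i + 1) :
    ∑ j ∈ range (i + 1), P.coeff j * (q ^ (i + 1 - j) - 1) =
      (q ^ ((i : ℤ) + 1 - m) - 1) * P.eval 1 := by
  have hdeg : ∀ j ≥ 2 * m + 1, P.coeff j * (q ^ (i + 1 - j) - 1) = 0 := fun j hj ↦ by
    rw [coeff_eq_zero_of_natDegree_lt (by linarith [hP.natDegree_le]), zero_mul]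
  have hpow : ∀ j ≥ i + 1, P.coeff j * (q ^ (i + 1 - j) - 1) = 0 := fun j hj ↦ by
    rw [Nat.sub_eq_zero_of_le hj, pow_zero, sub_self, mul_zero]
  rw [← eventually_constant_sum hpow (Nat.le_add_right (i + 1) (2 * m + 1)),
    eventually_constant_sum hdeg (Nat.le_add_left (2 * m + 1) (i + 1))]
  simp only [mul_sub_one, sum_sub_distrib]
  rw [hP.sum_coeff_mul_pow hq (k := 0) (by omega) (by omega), range_zero, sum_empty, sub_zero,
    ← hP.eval_one_eq_sum]
  ring

variable {B : ℕ → K}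

theorem quotient_coeff_eq_pow_mul_add (hP : P.SatisfiesFunctionalEquation q m) (hq₀ : q ≠ 0)
    (hq₁ : q ≠ 1)
    (hB : (P : K⟦X⟧) = (1 - PowerSeries.X) * (1 - PowerSeries.C q * PowerSeries.X) *
      PowerSeries.mk B) {i : ℕ} (hmi : m ≤ i) (him : i + 2 ≤ 2 * m) :
    B i = q ^ (i + 1 - m) * B (2 * m - 2 - i) + P.eval 1 * ((q ^ (i + 1 - m) - 1) / (q - 1)) := by
  obtain ⟨i', hi'⟩ : ∃ i', i + i' + 2 = 2 * m := ⟨2 * m - 2 - i, by omega⟩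
  rw [show 2 * m - 2 - i = i' by omega]
  have hEi := (sub_one_mul_eq_sum_of_coe_eq_mul hB i).trans
    (hP.sum_coeff_mul_pow_sub_one hq₀ (k := i' + 2) (by omega))
  have hEi' := (sub_one_mul_eq_sum_of_coe_eq_mul hB i').trans
    (hP.sum_coeff_mul_pow_sub_one hq₀ (k := i + 2) (by omega))
  rw [sum_range_succ] at hEi hEi'
  have hfe := hP.coeff_eq (i + 1) (by omega)
  rw [show 2 * m - (i + 1) = i' + 1 by omega] at hfe
  push_cast at hfe
  have hpow : (q ^ (i + 1 - m) : K) = q ^ ((i : ℤ) + 1 - m) := by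
    rw [← zpow_natCast]; congr 1; omega
  have hpow_mul : q ^ ((i : ℤ) + 1 - m) * q ^ ((i' : ℤ) + 1 - m) = 1 := by
    rw [← zpow_add₀ hq₀, show (i : ℤ) + 1 - m + (i' + 1 - m) = 0 by omega, zpow_zero]
  rw [hpow]
  field_simp [sub_ne_zero.mpr hq₁]
  -- `hfe` cancels the boundary terms `d_{i+1}` and `q^{i+1-m} d_{i'+1}` of the partial sums
  linear_combination hEi - q ^ ((i : ℤ) + 1 - m) * hEi' + hfe +
    (∑ j ∈ range (i + 1), P.coeff j + P.coeff (i + 1) - P.eval 1) * hpow_mul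

theorem quotient_coeff_eq_eval_one_mul (hP : P.SatisfiesFunctionalEquation q m) (hq₀ : q ≠ 0)
    (hq₁ : q ≠ 1)
    (hB : (P : K⟦X⟧) = (1 - PowerSeries.X) * (1 - PowerSeries.C q * PowerSeries.X) *
      PowerSeries.mk B) {i : ℕ} (hi : 2 * m ≤ i + 1) :
    B i = P.eval 1 * ((q ^ (i + 1 - m) - 1) / (q - 1)) := by
  have hE := (sub_one_mul_eq_sum_of_coe_eq_mul hB i).trans
    (hP.sum_coeff_mul_pow_sub_one_of_le hq₀ hi)
  rw [show ((i : ℤ) + 1 - m) = ((i + 1 - m : ℕ) : ℤ) by omega, zpow_natCast] at hE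
  field_simp [sub_ne_zero.mpr hq₁]
  linear_combination hE

end SatisfiesFunctionalEquation
end Polynomial

section Duursma

variable (q m : ℕ) (A : ℕ → ℤ)

theorem duursmaD_coeff (j : ℕ) :
    (duursmaD q (m + 1) A).coeff j =
      if j ≤ m then (A j : ℚ)
      else if j ≤ 2 * m then A (2 * m - j) * (q : ℚ) ^ (j - m) else 0 := by
  simp only [duursmaD, Polynomial.coeff_add, Polynomial.finsetSum_coeff,
    Polynomial.coeff_C_mul_X_pow, sum_ite_eq, mem_range, mem_Icc]
  rw [show 2 * (m + 1) - 2 = 2 * m by omega, Nat.add_sub_add_right]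
  split_ifs <;> first | omega | simp

theorem duursmaD_satisfiesFunctionalEquation (hq : q ≠ 0) :
    (duursmaD q (m + 1) A).SatisfiesFunctionalEquation q m where
  natDegree_le := natDegree_le_iff_coeff_eq_zero.mpr fun j hj ↦ by
    rw [duursmaD_coeff, if_neg (by omega), if_neg (by omega)]
  coeff_eq j hj := by
    rw [duursmaD_coeff, duursmaD_coeff, Nat.sub_sub_self hj]
    split_ifs <;> try omega
    · obtain rfl : j = m := by omega
      simp [two_mul]
    · rw [show 2 * m - j - m = m - j by omega, mul_left_comm, ← zpow_natCast,
        ← zpow_add₀ (by exact_mod_cast hq), show (j : ℤ) - m + (m - j : ℕ) = 0 by omega,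
        zpow_zero, mul_one]
    · rw [show (j : ℤ) - m = (j - m : ℕ) by omega, zpow_natCast, mul_comm]

theorem duursmaD_coeff_nonneg (hA : ∀ j, 0 ≤ A j) (j : ℕ) :
    0 ≤ (duursmaD q (m + 1) A).coeff j := by
  have := hA j
  have := hA (2 * m - j)
  rw [duursmaD_coeff]
  split_ifs <;> positivity

end Duursma

/-- Let `q ≥ 2`, `g ≥ 1`, `A_0, …, A_{g−1}` integers with `A_0 = 1` and all `A_j ≥ 0`,
`D` the associated Duursma reduced polynomial and `(B_i)` defined by
`D(t)/((1−t)(1−qt)) = Σ_i B_i t^i`.  Then `B_i ≥ 1` for all `i`,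
`B_i = q^{i−g+2} B_{2g−4−i} + D(1)(q^{i−g+2}−1)/(q−1)` for `g−1 ≤ i ≤ 2g−4`, and
`B_i = D(1)(q^{i−g+2}−1)/(q−1)` for `i ≥ 2g−3`. -/
theorem virtual_riemann_roch_relations (q g : ℕ) (hq : 2 ≤ q) (hg : 1 ≤ g)
    (A : ℕ → ℤ) (hA0 : A 0 = 1) (hA : ∀ j, 0 ≤ A j) (B : ℕ → ℚ)
    (hB : ((duursmaD q g A : Polynomial ℚ) : PowerSeries ℚ) =
      ((1 - PowerSeries.X) * (1 - PowerSeries.C (q : ℚ) * PowerSeries.X)) *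
        PowerSeries.mk B) :
    (∀ i, 1 ≤ B i) ∧
    (∀ i, g ≤ i + 1 → i + 4 ≤ 2 * g →
      B i = (q : ℚ) ^ (i + 2 - g) * B (2 * g - 4 - i) +
        (duursmaD q g A).eval 1 * (((q : ℚ) ^ (i + 2 - g) - 1) / ((q : ℚ) - 1))) ∧
    (∀ i, 2 * g ≤ i + 3 →
      B i = (duursmaD q g A).eval 1 * (((q : ℚ) ^ (i + 2 - g) - 1) / ((q : ℚ) - 1))) := by
  obtain ⟨m, rfl⟩ : ∃ m, g = m + 1 := ⟨g - 1, by omega⟩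
  have hq₁ : (1 : ℚ) < q := by exact_mod_cast hq
  have hq₀ : (q : ℚ) ≠ 0 := (zero_lt_one.trans hq₁).ne'
  have hP := duursmaD_satisfiesFunctionalEquation q m A (by omega)
  refine ⟨fun i ↦ ?_, fun i hi₁ hi₂ ↦ ?_, fun i hi ↦ ?_⟩
  · simpa using PowerSeries.one_le_coeff_of_eq_mul hB hq₁
      (by simp [duursmaD_coeff, hA0]) (fun j ↦ by simpa using duursmaD_coeff_nonneg q m A hA j) i
  · rw [show i + 2 - (m + 1) = i + 1 - m by omega,
      show 2 * (m + 1) - 4 - i = 2 * m - 2 - i by omega]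
    exact hP.quotient_coeff_eq_pow_mul_add hq₀ hq₁.ne' hB (by omega) (by omega)
  · rw [show i + 2 - (m + 1) = i + 1 - m by omega]
    exact hP.quotient_coeff_eq_eval_one_mul hq₀ hq₁.ne' hB (by omega)
end
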